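/- A 2-counter machine step relation embeds into its VASS over-approximation: if 2CM M reaches configuration q'(x',y') from q(x,y) by a run of operations, then the VASS N built from M (with zero-tests replaced by two cost-free transitions) can read the corresponding word (with each z_i doubled) from q(x,y) reaching q'(x',y'). -/

import Mathlib

/-- Operations of a two-counter machine. -/
inductive Op : Type
  | inc1 | inc2 | dec1 | dec2 | z1 | z2
deriving DecidableEq

/-- One step of a two-counter machine with transition relation `δ`:
`inc_i`/`dec_i` increment/decrement counter `i` (decrement needs positivity),
`z_i` is enabled only when counter `i` is zero and leaves the counters unchanged. -/
def CMStep {Q : Type} (δ : Q → Op → Q → Prop) :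
    Q × ℕ × ℕ → Op → Q × ℕ × ℕ → Prop :=
  fun c op c' =>
    match op with
    | .inc1 => δ c.1 .inc1 c'.1 ∧ c'.2.1 = c.2.1 + 1 ∧ c'.2.2 = c.2.2
    | .inc2 => δ c.1 .inc2 c'.1 ∧ c'.2.1 = c.2.1 ∧ c'.2.2 = c.2.2 + 1
    | .dec1 => δ c.1 .dec1 c'.1 ∧ c.2.1 = c'.2.1 + 1 ∧ c'.2.2 = c.2.2
    | .dec2 => δ c.1 .dec2 c'.1 ∧ c'.2.1 = c.2.1 ∧ c.2.2 = c'.2.2 + 1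
    | .z1 => δ c.1 .z1 c'.1 ∧ c.2.1 = 0 ∧ c'.2 = c.2
    | .z2 => δ c.1 .z2 c'.1 ∧ c.2.2 = 0 ∧ c'.2 = c.2

/-- A run of a two-counter machine over a sequence of operations. -/
inductive CMRun {Q : Type} (δ : Q → Op → Q → Prop) :
    Q × ℕ × ℕ → List Op → Q × ℕ × ℕ → Prop
  | nil (c : Q × ℕ × ℕ) : CMRun δ c [] c
  | cons {c c' c'' : Q × ℕ × ℕ} {op : Op} {ops : List Op} :
      CMStep δ c op c' → CMRun δ c' ops c'' → CMRun δ c (op :: ops) c''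

/-- States of the VASS over-approximation `N` of a 2CM: the states of the
machine plus a fresh auxiliary state for each zero-test transition. -/
abbrev NState (Q : Type) : Type := Q ⊕ (Q × Op × Q)

/-- One labelled step of the VASS `N` built from the 2CM with transitions `δ`:
`inc`/`dec` transitions are kept (same counter effects), and each zero-test
transition over `z_i` is replaced by two consecutive transitions over letter
`z_i` with zero counter effect, through the fresh intermediate state. -/
inductive NStep {Q : Type} (δ : Q → Op → Q → Prop) :
    NState Q × ℕ × ℕ → Op → NState Q × ℕ × ℕ → Prop
  | inc1 {q q' : Q} {x y : ℕ} : δ q .inc1 q' →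
      NStep δ (.inl q, x, y) .inc1 (.inl q', x + 1, y)
  | inc2 {q q' : Q} {x y : ℕ} : δ q .inc2 q' →
      NStep δ (.inl q, x, y) .inc2 (.inl q', x, y + 1)
  | dec1 {q q' : Q} {x y : ℕ} : δ q .dec1 q' →
      NStep δ (.inl q, x + 1, y) .dec1 (.inl q', x, y)
  | dec2 {q q' : Q} {x y : ℕ} : δ q .dec2 q' →
      NStep δ (.inl q, x, y + 1) .dec2 (.inl q', x, y)
  | zin {q q' : Q} {x y : ℕ} {op : Op} : (op = .z1 ∨ op = .z2) → δ q op q' →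
      NStep δ (.inl q, x, y) op (.inr (q, op, q'), x, y)
  | zout {q q' : Q} {x y : ℕ} {op : Op} : (op = .z1 ∨ op = .z2) → δ q op q' →
      NStep δ (.inr (q, op, q'), x, y) op (.inl q', x, y)

/-- A run of the VASS `N` reading a word. -/
inductive NRun {Q : Type} (δ : Q → Op → Q → Prop) :
    NState Q × ℕ × ℕ → List Op → NState Q × ℕ × ℕ → Prop
  | nil (c : NState Q × ℕ × ℕ) : NRun δ c [] c
  | cons {c c' c'' : NState Q × ℕ × ℕ} {op : Op} {w : List Op} :
      NStep δ c op c' → NRun δ c' w c'' → NRun δ c (op :: w) c''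

/-- The word obtained from an operation sequence by doubling each `z_i`. -/
def doubleZ : List Op → List Op
  | [] => []
  | .z1 :: w => .z1 :: .z1 :: doubleZ w
  | .z2 :: w => .z2 :: .z2 :: doubleZ w
  | op :: w => op :: doubleZ w

theorem doubleZ_cons (op : Op) (w : List Op) : doubleZ (op :: w) = doubleZ [op] ++ doubleZ w := by
  cases op <;> rfl

namespace NRun

variable {Q : Type} {δ : Q → Op → Q → Prop}

theorem single {c c' : NState Q × ℕ × ℕ} {op : Op} (hs : NStep δ c op c') :
    NRun δ c [op] c' :=
  .cons hs (.nil _)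

theorem append {c c' c'' : NState Q × ℕ × ℕ} {u v : List Op}
    (hu : NRun δ c u c') (hv : NRun δ c' v c'') : NRun δ c (u ++ v) c'' := by
  induction hu with
  | nil => exact hv
  | cons hs _ ih => exact .cons hs (ih hv)

theorem zeroTest {q q' : Q} {x y : ℕ} {op : Op} (hop : op = .z1 ∨ op = .z2) (hδ : δ q op q') :
    NRun δ (.inl q, x, y) [op, op] (.inl q', x, y) :=
  .cons (.zin hop hδ) (single (.zout hop hδ))

theorem of_cmStep {c c' : Q × ℕ × ℕ} {op : Op} (hs : CMStep δ c op c') :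
    NRun δ (.inl c.1, c.2) (doubleZ [op]) (.inl c'.1, c'.2) := by
  obtain ⟨p, u, v⟩ := c
  obtain ⟨p', u', v'⟩ := c'
  cases op <;> simp only [CMStep, Prod.mk.injEq] at hs
  case inc1 => obtain ⟨hδ, rfl, rfl⟩ := hs; exact single (.inc1 hδ)
  case inc2 => obtain ⟨hδ, rfl, rfl⟩ := hs; exact single (.inc2 hδ)
  case dec1 => obtain ⟨hδ, rfl, rfl⟩ := hs; exact single (.dec1 hδ)
  case dec2 => obtain ⟨hδ, rfl, rfl⟩ := hs; exact single (.dec2 hδ)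
  case z1 => obtain ⟨hδ, -, rfl, rfl⟩ := hs; exact zeroTest (.inl rfl) hδ
  case z2 => obtain ⟨hδ, -, rfl, rfl⟩ := hs; exact zeroTest (.inr rfl) hδ

end NRun

theorem CMRun.toNRun {Q : Type} {δ : Q → Op → Q → Prop} {c c' : Q × ℕ × ℕ}
    {ops : List Op} (h : CMRun δ c ops c') :
    NRun δ (.inl c.1, c.2) (doubleZ ops) (.inl c'.1, c'.2) := by
  induction h with
  | nil => exact .nil _
  | cons hs _ ih => rw [doubleZ_cons]; exact (NRun.of_cmStep hs).append ih

/-- Every run of a 2CM embeds into its VASS over-approximation `N`: a 2CM run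
from `q(x, y)` to `q'(x', y')` yields a run of `N` from `q(x, y)` to
`q'(x', y')` reading the corresponding word with each `z_i` doubled. -/
theorem cmRun_to_nRun {Q : Type} (δ : Q → Op → Q → Prop)
    (q q' : Q) (x y x' y' : ℕ) (ops : List Op)
    (h : CMRun δ (q, x, y) ops (q', x', y')) :
    NRun δ (.inl q, x, y) (doubleZ ops) (.inl q', x', y') :=
  h.toNRun
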